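/- arXiv:1210.3875 — 2 statements merged into one kernel-verified Lean document; each statement's English description precedes it below -/
import Mathlib

section
/- For all a, b > 0 with a ≠ b, one has (4/9)·D(a,b) + (5/9)·H(a,b) < T(a,b). -/
noncomputable def harmonicMean (a b : ℝ) : ℝ := 2 * a * b / (a + b)

noncomputable def seiffertT (a b : ℝ) : ℝ := (a - b) / (2 * Real.arctan ((a - b) / (a + b)))

noncomputable def contraD (a b : ℝ) : ℝ := (a ^ 3 + b ^ 3) / (a ^ 2 + b ^ 2)

/-!
Write `a = s(1+t)`, `b = s(1-t)` with `s = (a+b)/2 > 0` and `0 < |t| < 1`. Then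
`D = s(1+3t²)/(1+t²)`, `H = s(1-t²)` and `T = s t / arctan t`, and the inequality becomes
`(3-t²)(3+5t²) / (9(1+t²)) < t / arctan t`. Both sides are even in `t`, and for `t > 0` this is
`arctan t < 9t(1+t²) / ((3-t²)(3+5t²))`, which holds for `0 < t < √3` because the difference of
the two sides vanishes at `0` and has derivative `4t⁴(81+102t²+5t⁴) / ((1+t²)(3-t²)²(3+5t²)²)`.
-/

open Real Set

section Means

variable {s : ℝ} (t : ℝ)

theorem contraD_mul_one_add_mul_one_sub (hs : s ≠ 0) :
    contraD (s * (1 + t)) (s * (1 - t)) = s * (1 + 3 * t ^ 2) / (1 + t ^ 2) := by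
  have hden : (s * (1 + t)) ^ 2 + (s * (1 - t)) ^ 2 = 2 * s ^ 2 * (1 + t ^ 2) := by ring
  rw [contraD, hden]
  field_simp
  ring

theorem harmonicMean_mul_one_add_mul_one_sub (hs : s ≠ 0) :
    harmonicMean (s * (1 + t)) (s * (1 - t)) = s * (1 - t ^ 2) := by
  rw [harmonicMean]
  field_simp
  ring

theorem seiffertT_mul_one_add_mul_one_sub (hs : s ≠ 0) :
    seiffertT (s * (1 + t)) (s * (1 - t)) = s * (t / arctan t) := by
  have hdiff : s * (1 + t) - s * (1 - t) = 2 * s * t := by ring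
  have hsum : s * (1 + t) + s * (1 - t) = 2 * s := by ring
  have hratio : 2 * s * t / (2 * s) = t := by field_simp
  rw [seiffertT, hdiff, hsum, hratio, mul_assoc, mul_div_mul_left _ _ two_ne_zero, mul_div_assoc]

end Means

theorem hasDerivAt_div_sub_arctan {x : ℝ} (hx : x ^ 2 ≠ 3) :
    HasDerivAt (fun y => 9 * y * (1 + y ^ 2) / ((3 - y ^ 2) * (3 + 5 * y ^ 2)) - arctan y)
      (4 * x ^ 4 * (81 + 102 * x ^ 2 + 5 * x ^ 4) /
        ((1 + x ^ 2) * ((3 - x ^ 2) * (3 + 5 * x ^ 2)) ^ 2)) x := by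
  have hx' : 3 - x ^ 2 ≠ 0 := sub_ne_zero.2 (Ne.symm hx)
  have hnum : HasDerivAt (fun y => 9 * y * (1 + y ^ 2)) (9 + 27 * x ^ 2) x := by
    refine (((hasDerivAt_id' x).const_mul 9).mul ((hasDerivAt_pow 2 x).const_add 1)).congr_deriv ?_
    ring
  have hden : HasDerivAt (fun y => (3 - y ^ 2) * (3 + 5 * y ^ 2)) (24 * x - 20 * x ^ 3) x := by
    refine (((hasDerivAt_pow 2 x).const_sub 3).mul
      (((hasDerivAt_pow 2 x).const_mul 5).const_add 3)).congr_deriv ?_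
    ring
  refine ((hnum.div hden (by positivity)).sub (hasDerivAt_arctan x)).congr_deriv ?_
  field_simp
  ring

theorem arctan_lt_div_of_pos_of_sq_lt_three {t : ℝ} (ht : 0 < t) (ht3 : t ^ 2 < 3) :
    arctan t < 9 * t * (1 + t ^ 2) / ((3 - t ^ 2) * (3 + 5 * t ^ 2)) := by
  set g : ℝ → ℝ := fun y => 9 * y * (1 + y ^ 2) / ((3 - y ^ 2) * (3 + 5 * y ^ 2)) - arctan y
  have hsq {y : ℝ} (hy : y ∈ Icc 0 t) : y ^ 2 < 3 :=
    (pow_le_pow_left₀ hy.1 hy.2 2).trans_lt ht3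
  have hderiv {y : ℝ} (hy : y ∈ Icc 0 t) := hasDerivAt_div_sub_arctan (hsq hy).ne
  have hmono : StrictMonoOn g (Icc 0 t) := by
    refine strictMonoOn_of_deriv_pos (convex_Icc 0 t)
      (fun y hy => (hderiv hy).continuousAt.continuousWithinAt) fun y hy => ?_
    rw [interior_Icc] at hy
    have hy3 : 0 < 3 - y ^ 2 := sub_pos.2 (hsq (Ioo_subset_Icc_self hy))
    rw [(hderiv (Ioo_subset_Icc_self hy)).deriv]
    have hy0 : 0 < y := hy.1
    positivity
  have := hmono (left_mem_Icc.2 ht.le) (right_mem_Icc.2 ht.le) ht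
  simpa [g] using this

theorem div_lt_div_arctan {t : ℝ} (ht : t ≠ 0) (ht3 : t ^ 2 < 3) :
    (3 - t ^ 2) * (3 + 5 * t ^ 2) / (9 * (1 + t ^ 2)) < t / arctan t := by
  wlog hpos : 0 < t generalizing t
  · simpa [arctan_neg, neg_div_neg_eq] using
      this (neg_ne_zero.2 ht) (by rwa [neg_sq]) (by linarith [ht.lt_or_gt.resolve_right hpos])
  have hden : 0 < (3 - t ^ 2) * (3 + 5 * t ^ 2) := mul_pos (by linarith) (by positivity)
  have harctan := arctan_lt_div_of_pos_of_sq_lt_three hpos ht3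
  rw [lt_div_iff₀ hden] at harctan
  rw [div_lt_div_iff₀ (by positivity) (arctan_pos.2 hpos)]
  linarith

theorem stmt_1 (a b : ℝ) (ha : 0 < a) (hb : 0 < b) (hab : a ≠ b) :
    (4 / 9) * contraD a b + (5 / 9) * harmonicMean a b < seiffertT a b := by
  obtain ⟨s, t, hs, ht, ht1, rfl, rfl⟩ :
      ∃ s t, 0 < s ∧ t ≠ 0 ∧ t ^ 2 < 1 ∧ a = s * (1 + t) ∧ b = s * (1 - t) := by
    refine ⟨(a + b) / 2, (a - b) / (a + b), by positivity,
      div_ne_zero (sub_ne_zero.2 hab) (by positivity), ?_, by field_simp; ring,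
      by field_simp; ring⟩
    rw [div_pow, div_lt_one (by positivity)]
    nlinarith [mul_pos ha hb]
  rw [contraD_mul_one_add_mul_one_sub t hs.ne', harmonicMean_mul_one_add_mul_one_sub t hs.ne',
    seiffertT_mul_one_add_mul_one_sub t hs.ne']
  calc 4 / 9 * (s * (1 + 3 * t ^ 2) / (1 + t ^ 2)) + 5 / 9 * (s * (1 - t ^ 2))
      = s * ((3 - t ^ 2) * (3 + 5 * t ^ 2) / (9 * (1 + t ^ 2))) := by
        field_simp
        ring
    _ < s * (t / arctan t) := mul_lt_mul_of_pos_left (div_lt_div_arctan ht (by linarith)) hs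
end

section
/- For all a, b > 0 with a ≠ b, the double inequality p·D(a,b) + (1−p)·H(a,b) < Q(a,b) < q·D(a,b) + (1−q)·H(a,b) holds if and only if p ≤ 1/2 and q ≥ √2/2. -/
noncomputable def quadraticMean (a b : ℝ) : ℝ := Real.sqrt ((a ^ 2 + b ^ 2) / 2)

/-!
Write `Q = H + t (D - H)`; since `D > H` for `a ≠ b`, the double inequality says exactly
`p < t(a, b) < q` for all `a ≠ b`. After cancelling `(a - b) ^ 2`, the weight `t(x, 1)` is
continuous on `x ≥ 0`, with `t(1, 1) = 1/2` and `t(0, 1) = √2/2`; this gives necessity. For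
sufficiency, `1/2 < t < √2/2` off the diagonal: `D + H < 2Q` and `Q < H + (√2/2)(D - H)` both
reduce, after squaring, to rational identities whose numerators are `(a - b) ^ 4` times a
polynomial with positive coefficients.
-/

open Filter Topology Set

section Means

variable {a b : ℝ}

lemma harmonicMean_pos (ha : 0 < a) (hb : 0 < b) : 0 < harmonicMean a b := by
  unfold harmonicMean; positivity

lemma quadraticMean_pos (ha : 0 < a) : 0 < quadraticMean a b := by
  unfold quadraticMean; positivity

lemma quadraticMean_sq : quadraticMean a b ^ 2 = (a ^ 2 + b ^ 2) / 2 := by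
  unfold quadraticMean; rw [Real.sq_sqrt (by positivity)]

lemma contraD_sub_harmonicMean (ha : 0 < a) (hb : 0 < b) :
    contraD a b - harmonicMean a b
      = (a - b) ^ 2 * (a ^ 2 + a * b + b ^ 2) / ((a ^ 2 + b ^ 2) * (a + b)) := by
  unfold contraD harmonicMean
  field_simp
  ring

lemma harmonicMean_lt_contraD (ha : 0 < a) (hb : 0 < b) (hne : a ≠ b) :
    harmonicMean a b < contraD a b := by
  have : a - b ≠ 0 := sub_ne_zero.mpr hne
  rw [← sub_pos, contraD_sub_harmonicMean ha hb]
  positivity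

lemma contraD_add_harmonicMean_lt (ha : 0 < a) (hb : 0 < b) (hne : a ≠ b) :
    (contraD a b + harmonicMean a b) / 2 < quadraticMean a b := by
  have hsum : contraD a b + harmonicMean a b
      = (a ^ 4 + 3 * a ^ 3 * b + 3 * a * b ^ 3 + b ^ 4) / ((a ^ 2 + b ^ 2) * (a + b)) := by
    unfold contraD harmonicMean
    field_simp
    ring
  have : a - b ≠ 0 := sub_ne_zero.mpr hne
  have hgap :
      0 < (a - b) ^ 4 * (a ^ 4 + 2 * a ^ 3 * b + a ^ 2 * b ^ 2 + 2 * a * b ^ 3 + b ^ 4) := by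
    positivity
  unfold quadraticMean
  rw [Real.lt_sqrt (by rw [hsum]; positivity), hsum, div_div, div_pow,
    div_lt_div_iff₀ (by positivity) (by positivity)]
  nlinarith [hgap]

lemma quadraticMean_lt_harmonicMean_add (ha : 0 < a) (hb : 0 < b) (hne : a ≠ b) :
    quadraticMean a b
      < harmonicMean a b + √2 / 2 * (contraD a b - harmonicMean a b) := by
  have hH := harmonicMean_pos ha hb
  have he := sub_pos.mpr (harmonicMean_lt_contraD ha hb hne)
  set H := harmonicMean a b
  set e := contraD a b - H
  have hsq : ((a ^ 2 + b ^ 2) / 2 - H ^ 2 - e ^ 2 / 2) ^ 2 < 2 * (H * e) ^ 2 := by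
    have : a - b ≠ 0 := sub_ne_zero.mpr hne
    have hgap : 2 * (H * e) ^ 2 - ((a ^ 2 + b ^ 2) / 2 - H ^ 2 - e ^ 2 / 2) ^ 2
        = (a - b) ^ 4 * a ^ 2 * b ^ 2 *
            (16 * a ^ 8 + 40 * a ^ 7 * b + 71 * a ^ 6 * b ^ 2 + 108 * a ^ 5 * b ^ 3
              + 106 * a ^ 4 * b ^ 4 + 108 * a ^ 3 * b ^ 5 + 71 * a ^ 2 * b ^ 6
              + 40 * a * b ^ 7 + 16 * b ^ 8) / (4 * ((a ^ 2 + b ^ 2) * (a + b)) ^ 4) := by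
      unfold e H contraD harmonicMean
      field_simp
      ring
    rw [← sub_pos, hgap]
    positivity
  have hsqrt : √(2 * (H * e) ^ 2) = √2 * (H * e) := by
    rw [Real.sqrt_mul zero_le_two, Real.sqrt_sq (by positivity)]
  have hcross : (a ^ 2 + b ^ 2) / 2 - H ^ 2 - e ^ 2 / 2 < √2 * (H * e) :=
    hsqrt ▸ Real.lt_sqrt_of_sq_lt hsq
  unfold quadraticMean
  rw [Real.sqrt_lt' (by positivity)]
  have h2 : √2 ^ 2 = 2 := Real.sq_sqrt zero_le_two
  linear_combination hcross - (e ^ 2 / 4) * h2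

/-- The weight `t` with `Q = t D + (1 - t) H`: this is `(Q - H) / (D - H)` with the common factor
`(a - b) ^ 2` cancelled, so that it stays continuous at `a = b` and at `a = 0`. -/
noncomputable def quadraticWeight (a b : ℝ) : ℝ :=
  (a ^ 2 + 4 * a * b + b ^ 2) * (a ^ 2 + b ^ 2)
    / (2 * (a + b) * (a ^ 2 + a * b + b ^ 2) * (quadraticMean a b + harmonicMean a b))

lemma quadraticMean_sub_harmonicMean (ha : 0 < a) (hb : 0 < b) :
    quadraticMean a b - harmonicMean a b
      = quadraticWeight a b * (contraD a b - harmonicMean a b) := by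
  have hQ := quadraticMean_pos (b := b) ha
  have hH := harmonicMean_pos ha hb
  have hQH : quadraticMean a b - harmonicMean a b
      = (quadraticMean a b ^ 2 - harmonicMean a b ^ 2)
          / (quadraticMean a b + harmonicMean a b) := by
    field_simp; ring
  rw [hQH, quadraticMean_sq, quadraticWeight, contraD_sub_harmonicMean ha hb]
  unfold harmonicMean
  field_simp
  ring

lemma lt_quadraticMean_iff (ha : 0 < a) (hb : 0 < b) (hne : a ≠ b) {p : ℝ} :
    p * contraD a b + (1 - p) * harmonicMean a b < quadraticMean a b
      ↔ p < quadraticWeight a b := by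
  have he := sub_pos.mpr (harmonicMean_lt_contraD ha hb hne)
  have hQ := quadraticMean_sub_harmonicMean ha hb
  constructor
  · intro h
    exact lt_of_mul_lt_mul_right (by linarith) he.le
  · intro h
    linarith [mul_lt_mul_of_pos_right h he]

lemma quadraticMean_lt_iff (ha : 0 < a) (hb : 0 < b) (hne : a ≠ b) {q : ℝ} :
    quadraticMean a b < q * contraD a b + (1 - q) * harmonicMean a b
      ↔ quadraticWeight a b < q := by
  have he := sub_pos.mpr (harmonicMean_lt_contraD ha hb hne)
  have hQ := quadraticMean_sub_harmonicMean ha hb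
  constructor
  · intro h
    exact lt_of_mul_lt_mul_right (by linarith) he.le
  · intro h
    linarith [mul_lt_mul_of_pos_right h he]

lemma half_lt_quadraticWeight (ha : 0 < a) (hb : 0 < b) (hne : a ≠ b) :
    1 / 2 < quadraticWeight a b := by
  rw [← lt_quadraticMean_iff ha hb hne]
  linarith [contraD_add_harmonicMean_lt ha hb hne]

lemma quadraticWeight_lt (ha : 0 < a) (hb : 0 < b) (hne : a ≠ b) :
    quadraticWeight a b < √2 / 2 := by
  rw [← quadraticMean_lt_iff ha hb hne]
  linarith [quadraticMean_lt_harmonicMean_add ha hb hne]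

lemma continuousAt_quadraticWeight_left {x₀ : ℝ} (h₀ : 0 ≤ x₀) :
    ContinuousAt (fun x => quadraticWeight x 1) x₀ := by
  have hH : ContinuousAt (fun x => harmonicMean x 1) x₀ := by
    unfold harmonicMean
    exact ContinuousAt.div (by fun_prop) (by fun_prop) (by positivity)
  have hQ : ContinuousAt (fun x => quadraticMean x 1) x₀ := by
    unfold quadraticMean; fun_prop
  have hH₀ : 0 ≤ harmonicMean x₀ 1 := by unfold harmonicMean; positivity
  have hQ₀ : 0 < quadraticMean x₀ 1 := by unfold quadraticMean; positivity
  unfold quadraticWeight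
  exact ContinuousAt.div (by fun_prop) (ContinuousAt.mul (by fun_prop) (hQ.add hH))
    (by positivity)

lemma tendsto_quadraticWeight_one :
    Tendsto (fun x => quadraticWeight x 1) (𝓝[≠] 1) (𝓝 (1 / 2)) := by
  have h := (continuousAt_quadraticWeight_left zero_le_one).tendsto
  have hval : quadraticWeight 1 1 = 1 / 2 := by
    unfold quadraticWeight quadraticMean harmonicMean; norm_num
  rw [hval] at h
  exact tendsto_nhdsWithin_of_tendsto_nhds h

lemma tendsto_quadraticWeight_zero :
    Tendsto (fun x => quadraticWeight x 1) (𝓝[>] 0) (𝓝 (√2 / 2)) := by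
  have h := (continuousAt_quadraticWeight_left le_rfl).tendsto
  have hval : quadraticWeight 0 1 = √2 / 2 := by
    unfold quadraticWeight quadraticMean harmonicMean; norm_num; ring
  rw [hval] at h
  exact tendsto_nhdsWithin_of_tendsto_nhds h

theorem stmt_5 (p q : ℝ) :
    (∀ a b : ℝ, 0 < a → 0 < b → a ≠ b →
      p * contraD a b + (1 - p) * harmonicMean a b < quadraticMean a b ∧
      quadraticMean a b < q * contraD a b + (1 - q) * harmonicMean a b) ↔
    (p ≤ 1 / 2 ∧ Real.sqrt 2 / 2 ≤ q) := by
  constructor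
  · intro h
    have hw : ∀ x : ℝ, 0 < x → x ≠ 1 →
        p < quadraticWeight x 1 ∧ quadraticWeight x 1 < q :=
      fun x hx hne => by
        rw [← lt_quadraticMean_iff hx one_pos hne, ← quadraticMean_lt_iff hx one_pos hne]
        exact h x 1 hx one_pos hne
    constructor
    · refine ge_of_tendsto tendsto_quadraticWeight_one ?_
      filter_upwards [nhdsWithin_le_nhds (Ioi_mem_nhds one_pos), self_mem_nhdsWithin]
        with x hx hne
      exact (hw x hx hne).1.le
    · refine le_of_tendsto tendsto_quadraticWeight_zero ?_
      filter_upwards [self_mem_nhdsWithin, nhdsWithin_le_nhds (Iio_mem_nhds one_pos)]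
        with x hx hx₁
      exact (hw x hx hx₁.ne).2.le
  · rintro ⟨hp, hq⟩ a b ha hb hne
    rw [lt_quadraticMean_iff ha hb hne, quadraticMean_lt_iff ha hb hne]
    exact ⟨hp.trans_lt (half_lt_quadraticWeight ha hb hne),
      (quadraticWeight_lt ha hb hne).trans_le hq⟩
end Means
end
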